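/- Let X be an n-valued group and x ∈ X. If S*(x, r) = ∅ for some r ≥ 1, then S*(x, r') = ∅ for every r' > r. -/
import Mathlib


/-- An `n`-valued group: multiplication takes values in `n`-element multisets. -/
structure NValuedGroup (n : ℕ) (X : Type*) where
  mul : X → X → Multiset X
  e : X
  inv : X → X
  one_le : 1 ≤ n
  card_mul : ∀ x y, (mul x y).card = n
  assoc : ∀ x y z, (mul x y).bind (fun t => mul t z) = (mul y z).bind (fun t => mul x t)
  e_mul : ∀ x, mul e x = Multiset.replicate n x
  mul_e : ∀ x, mul x e = Multiset.replicate n x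
  inv_mul : ∀ x, e ∈ mul (inv x) x
  mul_inv : ∀ x, e ∈ mul x (inv x)

variable {n : ℕ} {X : Type*}

/-- The multiset `x * s₁ * ⋯ * s_k` (iterated left-to-right, starting from `{x}`). -/
def NValuedGroup.wordProd (G : NValuedGroup n X) (x : X) (l : List X) : Multiset X :=
  l.foldl (fun m s => m.bind (fun t => G.mul t s)) {x}

/-- The ball `B_S(x, r)`: elements lying in `Set(x * s₁ * ⋯ * s_m)` for some `m ≤ r`,
`s₁, …, s_m ∈ S`. -/
def NValuedGroup.ball (G : NValuedGroup n X) (S : Set X) (x : X) (r : ℕ) : Set X :=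
  {y | ∃ l : List X, l.length ≤ r ∧ (∀ s ∈ l, s ∈ S) ∧ y ∈ G.wordProd x l}

/-- `S` generates `X`: every element lies in `Set(s₁ * ⋯ * s_m)` for some `m ≥ 1`,
`s₁, …, s_m ∈ S`. -/
def NValuedGroup.IsGenSet (G : NValuedGroup n X) (S : Set X) : Prop :=
  ∀ x : X, ∃ s₀ ∈ S, ∃ l : List X, (∀ s ∈ l, s ∈ S) ∧ x ∈ G.wordProd s₀ l

/-- `G.spow x i` is the multivalued power `x^{*(i+1)}`; so `x^{*r} = G.spow x (r-1)` for `r ≥ 1`. -/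
def NValuedGroup.spow (G : NValuedGroup n X) (x : X) : ℕ → Multiset X
  | 0 => {x}
  | r + 1 => (G.spow x r).bind (fun t => G.mul t x)

/-- `B*(x, r) = ⋃_{i=1}^{r} Set(x^{*i})`; in particular `B*(x, 0) = ∅`. -/
def NValuedGroup.Bstar (G : NValuedGroup n X) (x : X) (r : ℕ) : Set X :=
  {y | ∃ i < r, y ∈ G.spow x i}

/-- `S*(x, r) = B*(x, r) \ B*(x, r-1)`. -/
def NValuedGroup.Sstar (G : NValuedGroup n X) (x : X) (r : ℕ) : Set X :=
  G.Bstar x r \ G.Bstar x (r - 1)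

/-- If the sphere `S*(x, r)` is empty for some `r ≥ 1`, then so is `S*(x, r')` for all
`r' > r`. -/
theorem sstar_empty_of_empty (G : NValuedGroup n X) (x : X) (r : ℕ) (hr : 1 ≤ r)
    (h : G.Sstar x r = ∅) : ∀ r' : ℕ, r < r' → G.Sstar x r' = ∅ := by
  have hsub : G.Bstar x r ⊆ G.Bstar x (r - 1) := Set.diff_eq_empty.mp h
  -- All balls of radius ≥ r are contained in Bstar (r-1)
  have key : ∀ m, r ≤ m → G.Bstar x m ⊆ G.Bstar x (r - 1) := by
    intro m
    induction m with
    | zero => intro hm; omega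
    | succ m ih =>
      intro hm y hy
      obtain ⟨i, hi, hyi⟩ := hy
      rcases lt_or_eq_of_le (Nat.lt_succ_iff.mp hi) with hi' | hi'
      · -- i < m
        rcases lt_or_ge m r with hmr | hmr
        · exact hsub ⟨i, by omega, hyi⟩
        · exact ih hmr ⟨i, hi', hyi⟩
      · -- i = m
        subst hi'
        rcases Nat.eq_zero_or_pos i with h0 | him
        · exact hsub ⟨i, by omega, hyi⟩
        obtain ⟨j, rfl⟩ : ∃ j, i = j + 1 := ⟨i - 1, by omega⟩
        simp only [NValuedGroup.spow, Multiset.mem_bind] at hyi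
        obtain ⟨t, htj, hyt⟩ := hyi
        have ht : t ∈ G.Bstar x (r - 1) := by
          rcases lt_or_ge j (r - 1) with hj | hj
          · exact ⟨j, hj, htj⟩
          · rcases lt_or_ge j r with hjr | hjr
            · exact hsub ⟨j, hjr, htj⟩
            · exact ih (by omega) ⟨j, by omega, htj⟩
        obtain ⟨k, hk, htk⟩ := ht
        have : y ∈ G.spow x (k + 1) := by
          simp only [NValuedGroup.spow, Multiset.mem_bind]
          exact ⟨t, htk, hyt⟩
        exact hsub ⟨k + 1, by omega, this⟩
  intro r' hr'
  have h1 : G.Bstar x r' ⊆ G.Bstar x (r - 1) := key r' (le_of_lt hr')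
  have h2 : G.Bstar x (r - 1) ⊆ G.Bstar x (r' - 1) := by
    intro y ⟨i, hi, hyi⟩; exact ⟨i, by omega, hyi⟩
  exact Set.diff_eq_empty.mpr (fun y hy => h2 (h1 hy))
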